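/- arXiv:0712.2796 — 4 statements merged into one kernel-verified Lean document; each statement's English description precedes it below -/
import Mathlib

section
/- If f is differentiable on an open interval I and for some ε > 0 the identity f'(ζ) = (f(ζ+t) - f(ζ-t))/(2t) holds whenever 0 < |t| < ε and ζ±t ∈ I, then f is a quadratic polynomial on I (i.e., there exist constants a, b, c such that f(z) = a z² + b z + c for all z ∈ I). -/
open Set

/-- A function with derivative zero at every point of an open interval is constant there. -/
private lemma const_of_hasDerivAt_zero {a b : ℝ} {u : ℝ → ℝ}
    (hd : ∀ x ∈ Set.Ioo a b, HasDerivAt u 0 x) {x y : ℝ}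
    (hx : x ∈ Set.Ioo a b) (hy : y ∈ Set.Ioo a b) : u x = u y := by
  refine (convex_Ioo a b).is_const_of_fderivWithin_eq_zero
    (fun z hz => (hd z hz).differentiableAt.differentiableWithinAt) (fun z hz => ?_) hx hy
  rw [fderivWithin_of_isOpen isOpen_Ioo hz, (hd z hz).hasFDerivAt.fderiv]
  ext
  simp

/-- Midpoint mean value property on an open interval forces `f` to be quadratic there. -/
theorem midpoint_mvt_quadratic
    (a₀ b₀ : ℝ) (I : Set ℝ) (hI : I = Set.Ioo a₀ b₀) (hne : I.Nonempty)
    (f : ℝ → ℝ) (hf : ∀ x ∈ I, DifferentiableAt ℝ f x)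
    (ε : ℝ) (hε : 0 < ε)
    (hmid : ∀ ζ ∈ I, ∀ t : ℝ, 0 < |t| → |t| < ε → ζ + t ∈ I → ζ - t ∈ I →
      deriv f ζ = (f (ζ + t) - f (ζ - t)) / (2 * t)) :
    ∃ a b c : ℝ, ∀ z ∈ I, f z = a * z ^ 2 + b * z + c := by
  subst hI
  set g := deriv f with hgdef
  -- the key local statement: near every point of `I`, `g` is differentiable with
  -- locally constant derivative
  have main : ∀ ζ ∈ Set.Ioo a₀ b₀, ∃ r > 0,
      Set.Ioo (ζ - r) (ζ + r) ⊆ Set.Ioo a₀ b₀ ∧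
      ∀ y ∈ Set.Ioo (ζ - r) (ζ + r), HasDerivAt g (deriv g ζ) y := by
    intro ζ hζ
    obtain ⟨hζ1, hζ2⟩ := hζ
    set r : ℝ := min (min (ζ - a₀) (b₀ - ζ) / 2) (ε / 2) with hrdef
    have hr0 : 0 < r := by
      have h1 : 0 < min (ζ - a₀) (b₀ - ζ) := lt_min (by linarith) (by linarith)
      exact lt_min (by linarith) (by linarith)
    have hr1 : 2 * r ≤ ζ - a₀ := by
      have := min_le_left (min (ζ - a₀) (b₀ - ζ) / 2) (ε / 2)
      have := min_le_left (ζ - a₀) (b₀ - ζ)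
      simp only [hrdef] at *
      nlinarith [min_le_left (min (ζ - a₀) (b₀ - ζ) / 2) (ε / 2),
        min_le_left (ζ - a₀) (b₀ - ζ)]
    have hr2 : 2 * r ≤ b₀ - ζ := by
      nlinarith [min_le_left (min (ζ - a₀) (b₀ - ζ) / 2) (ε / 2),
        min_le_right (ζ - a₀) (b₀ - ζ)]
    have hrε : r < ε := by
      have := min_le_right (min (ζ - a₀) (b₀ - ζ) / 2) (ε / 2)
      linarith
    have hsub : ∀ z : ℝ, |z - ζ| < 2 * r → z ∈ Set.Ioo a₀ b₀ := by
      intro z hz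
      rw [abs_lt] at hz
      constructor <;> [linarith; linarith]
    -- Step A: for each fixed t with `0 < |t| < r`, `g` is differentiable on the ball
    -- of radius `r`, with the explicit derivative.
    have stepA : ∀ t : ℝ, t ≠ 0 → |t| < r → ∀ y : ℝ, |y - ζ| < r →
        HasDerivAt g ((g (y + t) - g (y - t)) / (2 * t)) y := by
      intro t ht0 htr y hy
      have hyI : ∀ z : ℝ, |z - y| ≤ |t| → z ∈ Set.Ioo a₀ b₀ := by
        intro z hz
        apply hsub
        have : |z - ζ| ≤ |z - y| + |y - ζ| := abs_sub_le z y ζ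
        linarith
      have hyt : y + t ∈ Set.Ioo a₀ b₀ := hyI _ (by rw [show y + t - y = t by ring])
      have hyt' : y - t ∈ Set.Ioo a₀ b₀ := hyI _ (by
        rw [show y - t - y = -t by ring, abs_neg])
      -- the shifted functions have derivatives
      have h1 : HasDerivAt (fun z => f (z + t)) (g (y + t)) y :=
        HasDerivAt.comp_add_const y t ((hf _ hyt).hasDerivAt)
      have h2 : HasDerivAt (fun z => f (z - t)) (g (y - t)) y := by
        have := HasDerivAt.comp_add_const y (-t) ((hf _ (by simpa [sub_eq_add_neg] using hyt')).hasDerivAt)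
        simpa [sub_eq_add_neg] using this
      have hF : HasDerivAt (fun z => (f (z + t) - f (z - t)) / (2 * t))
          ((g (y + t) - g (y - t)) / (2 * t)) y := (h1.sub h2).div_const _
      refine hF.congr_of_eventuallyEq ?_
      have hmem : Set.Ioo (ζ - r) (ζ + r) ∈ nhds y := by
        refine isOpen_Ioo.mem_nhds ?_
        rw [abs_lt] at hy; exact ⟨by linarith, by linarith⟩
      filter_upwards [hmem] with z hz
      obtain ⟨hz1, hz2⟩ := hz
      have hzI : z ∈ Set.Ioo a₀ b₀ := hsub z (by rw [abs_lt]; constructor <;> linarith)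
      have hztI : z + t ∈ Set.Ioo a₀ b₀ := by
        apply hsub; rw [abs_lt]; rw [abs_lt] at htr
        obtain ⟨h1, h2⟩ := htr
        constructor <;> [linarith; linarith]
      have hztI' : z - t ∈ Set.Ioo a₀ b₀ := by
        apply hsub; rw [abs_lt]; rw [abs_lt] at htr
        obtain ⟨h1, h2⟩ := htr
        constructor <;> [linarith; linarith]
      exact hmid z hzI t (abs_pos.mpr ht0) (lt_trans htr hrε) hztI hztI'
    -- Step B: Jensen's equation for `g` at `ζ`.
    have stepB : ∀ t : ℝ, |t| < r → g (ζ + t) + g (ζ - t) = 2 * g ζ := by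
      intro t ht
      have hmem : Set.Ioo (-r : ℝ) r ∈ nhds t := isOpen_Ioo.mem_nhds (abs_lt.mp ht)
      have hφ0 : ∀ s ∈ Set.Ioo (-r : ℝ) r, f (ζ + s) - f (ζ - s) - 2 * s * g ζ = 0 := by
        intro s hs
        rcases eq_or_ne s 0 with rfl | hs0
        · simp
        · have hsr : |s| < r := abs_lt.mpr ⟨hs.1, hs.2⟩
          have h1 : ζ + s ∈ Set.Ioo a₀ b₀ := hsub _ (by
            rw [show ζ + s - ζ = s by ring]; linarith)
          have h2 : ζ - s ∈ Set.Ioo a₀ b₀ := hsub _ (by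
            rw [show ζ - s - ζ = -s by ring, abs_neg]; linarith)
          have := hmid ζ ⟨hζ1, hζ2⟩ s (abs_pos.mpr hs0) (lt_trans hsr hrε) h1 h2
          rw [hgdef] at this ⊢
          field_simp at this
          linarith [this]
      -- the function `φ` vanishes on a neighborhood of `t`, so its derivative there is 0
      have hd1 : HasDerivAt (fun s => f (ζ + s)) (g (ζ + t)) t := by
        have h1 : ζ + t ∈ Set.Ioo a₀ b₀ := hsub _ (by
          rw [show ζ + t - ζ = t by ring]; linarith)
        exact HasDerivAt.comp_const_add ζ t ((hf _ h1).hasDerivAt)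
      have hd2 : HasDerivAt (fun s => f (ζ - s)) (-(g (ζ - t))) t := by
        have h2 : ζ - t ∈ Set.Ioo a₀ b₀ := hsub _ (by
          rw [show ζ - t - ζ = -t by ring, abs_neg]; linarith)
        exact HasDerivAt.comp_const_sub ζ t ((hf _ h2).hasDerivAt)
      have hd3 : HasDerivAt (fun s : ℝ => 2 * s * g ζ) (2 * g ζ) t := by
        have := (hasDerivAt_id t).const_mul (2 : ℝ) |>.mul_const (g ζ)
        simpa [mul_assoc] using this
      have hφ : HasDerivAt (fun s => f (ζ + s) - f (ζ - s) - 2 * s * g ζ)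
          (g (ζ + t) - -(g (ζ - t)) - 2 * g ζ) t := (hd1.sub hd2).sub hd3
      have hzero : HasDerivAt (fun _ : ℝ => (0 : ℝ))
          (g (ζ + t) - -(g (ζ - t)) - 2 * g ζ) t := by
        refine hφ.congr_of_eventuallyEq ?_
        filter_upwards [hmem] with s hs
        exact (hφ0 s hs).symm
      have := hzero.unique (hasDerivAt_const t 0)
      linarith [this]
    -- derivative of g at ζ
    have hA0 : HasDerivAt g ((g (ζ + r / 2) - g (ζ - r / 2)) / (2 * (r / 2))) ζ :=
      stepA (r / 2) (by positivity) (by rw [abs_of_pos (by positivity)]; linarith) ζ (by simpa)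
    set q : ℝ := (g (ζ + r / 2) - g (ζ - r / 2)) / (2 * (r / 2)) with hq
    -- Step C: g is affine on the ball of radius r
    have stepC : ∀ t : ℝ, |t| < r → g (ζ + t) = g ζ + t * q := by
      intro t ht
      rcases eq_or_ne t 0 with rfl | ht0
      · simp
      · have hA := stepA t ht0 ht ζ (by simpa)
        have huniq : q = (g (ζ + t) - g (ζ - t)) / (2 * t) := hA0.unique hA
        have hB := stepB t ht
        have h2t : (2 : ℝ) * t ≠ 0 := mul_ne_zero two_ne_zero ht0
        have hBt : g (ζ - t) = 2 * g ζ - g (ζ + t) := by linarith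
        rw [huniq, hBt]
        field_simp
        ring
    -- Step D: conclude
    refine ⟨r, hr0, fun z hz => hsub z (by rw [abs_lt]; exact ⟨by linarith [hz.1], by linarith [hz.2]⟩), fun y hy => ?_⟩
    obtain ⟨hy1, hy2⟩ := hy
    have haff : HasDerivAt (fun z => g ζ + (z - ζ) * q) q y := by
      have := ((hasDerivAt_id y).sub_const ζ).mul_const q |>.const_add (g ζ)
      simpa using this
    have hgq : HasDerivAt g q y := by
      refine haff.congr_of_eventuallyEq ?_
      have hmem : Set.Ioo (ζ - r) (ζ + r) ∈ nhds y := isOpen_Ioo.mem_nhds ⟨hy1, hy2⟩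
      filter_upwards [hmem] with z hz
      have := stepC (z - ζ) (abs_lt.mpr ⟨by linarith [hz.1], by linarith [hz.2]⟩)
      simpa using this
    have : deriv g ζ = q := hA0.deriv
    rw [this]
    exact hgq
  -- h := deriv g is locally constant on I, hence has zero derivative on I
  have hconst : ∀ ζ ∈ Set.Ioo a₀ b₀, HasDerivAt (deriv g) 0 ζ := by
    intro ζ hζ
    obtain ⟨r, hr0, hrsub, hloc⟩ := main ζ hζ
    refine (hasDerivAt_const ζ (deriv g ζ)).congr_of_eventuallyEq ?_
    have hmem : Set.Ioo (ζ - r) (ζ + r) ∈ nhds ζ :=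
      isOpen_Ioo.mem_nhds ⟨by linarith, by linarith⟩
    filter_upwards [hmem] with y hy
    obtain ⟨r', hr'0, _, hloc'⟩ := main y (hrsub hy)
    have h1 : HasDerivAt g (deriv g ζ) y := hloc y hy
    have h2 : HasDerivAt g (deriv g y) y := hloc' y ⟨by linarith, by linarith⟩
    exact h2.unique h1
  obtain ⟨x₀, hx₀⟩ := hne
  set c₂ : ℝ := deriv g x₀ with hc₂
  have hderivg : ∀ z ∈ Set.Ioo a₀ b₀, HasDerivAt g c₂ z := by
    intro z hz
    obtain ⟨r, hr0, _, hloc⟩ := main z hz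
    have h1 : HasDerivAt g (deriv g z) z := hloc z ⟨by linarith, by linarith⟩
    have : deriv g z = c₂ := const_of_hasDerivAt_zero hconst hz hx₀
    rwa [this] at h1
  -- so g z = c₂ * z + b on I
  set b : ℝ := g x₀ - c₂ * x₀ with hb
  have hgform : ∀ z ∈ Set.Ioo a₀ b₀, g z = c₂ * z + b := by
    intro z hz
    have hu : ∀ x ∈ Set.Ioo a₀ b₀, HasDerivAt (fun z => g z - c₂ * z) 0 x := by
      intro x hx
      have := (hderivg x hx).sub ((hasDerivAt_id x).const_mul c₂)
      simp at this; exact this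
    have := const_of_hasDerivAt_zero hu hz hx₀
    simp only [hb]
    linarith [this]
  -- finally f z = (c₂/2) z² + b z + c on I
  refine ⟨c₂ / 2, b, f x₀ - (c₂ / 2 * x₀ ^ 2 + b * x₀), fun z hz => ?_⟩
  have hv : ∀ x ∈ Set.Ioo a₀ b₀,
      HasDerivAt (fun z => f z - (c₂ / 2 * z ^ 2 + b * z)) 0 x := by
    intro x hx
    have hfx : HasDerivAt f (g x) x := (hf x hx).hasDerivAt
    have hq : HasDerivAt (fun z : ℝ => c₂ / 2 * z ^ 2 + b * z) (c₂ * x + b) x := by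
      have h1 : HasDerivAt (fun z : ℝ => z ^ 2) (2 * x) x := by
        simpa using hasDerivAt_pow 2 x
      have := (h1.const_mul (c₂ / 2)).add ((hasDerivAt_id x).const_mul b)
      exact this.congr_deriv (by ring)
    have := hfx.sub hq
    rw [hgform x hx] at this
    simp at this; exact this
  have := const_of_hasDerivAt_zero hv hz hx₀
  linarith [this]
end

section
/- Under the midpoint mean value hypothesis — f differentiable on an open interval I with f'(ζ) = (f(ζ+t)-f(ζ-t))/(2t) whenever 0 < |t| < ε and ζ±t ∈ I — the function f is infinitely differentiable (C^∞) on I. -/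
open Set

/-- A function with zero derivative on an open interval is constant there. -/
lemma aux_const_of_deriv_zero {a b : ℝ} {F : ℝ → ℝ}
    (h : ∀ y ∈ Set.Ioo a b, HasDerivAt F 0 y)
    {y z : ℝ} (hy : y ∈ Set.Ioo a b) (hz : z ∈ Set.Ioo a b) : F y = F z := by
  apply (convex_Ioo a b).is_const_of_fderivWithin_eq_zero
    (fun w hw => ((h w hw).differentiableAt).differentiableWithinAt) ?_ hy hz
  intro w hw
  have h2 := (h w hw).hasFDerivAt.hasFDerivWithinAt (s := Set.Ioo a b)
  rw [h2.fderivWithin (uniqueDiffOn_Ioo a b w hw)]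
  exact ContinuousLinearMap.ext fun v => by simp

/-- Midpoint mean value property on an open interval makes `f` infinitely differentiable there. -/
theorem midpoint_mvt_smooth
    (a₀ b₀ : ℝ) (I : Set ℝ) (hI : I = Set.Ioo a₀ b₀)
    (f : ℝ → ℝ) (hf : ∀ x ∈ I, DifferentiableAt ℝ f x)
    (ε : ℝ) (hε : 0 < ε)
    (hmid : ∀ ζ ∈ I, ∀ t : ℝ, 0 < |t| → |t| < ε → ζ + t ∈ I → ζ - t ∈ I →
      deriv f ζ = (f (ζ + t) - f (ζ - t)) / (2 * t)) :
    ContDiffOn ℝ (⊤ : ℕ∞) f I := by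
  subst hI
  have hopen : IsOpen (Set.Ioo a₀ b₀) := isOpen_Ioo
  set S := Set.Ioo a₀ b₀ with hS
  set g := deriv f with hgdef
  set h := deriv g with hhdef
  -- Step 0: f is C^n on S for every n (bootstrap).
  have key : ∀ n : ℕ, ContDiffOn ℝ n f S := by
    intro n
    induction n with
    | zero =>
      simp only [Nat.cast_zero, contDiffOn_zero]
      exact fun x hx => (hf x hx).continuousAt.continuousWithinAt
    | succ n ih =>
      rw [show (((n+1 : ℕ)) : WithTop ℕ∞) = (n : WithTop ℕ∞) + 1 by push_cast; rfl,
        contDiffOn_succ_iff_deriv_of_isOpen hopen]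
      refine ⟨fun x hx => (hf x hx).differentiableWithinAt, by simp, ?_⟩
      intro x hx
      obtain ⟨hxa, hxb⟩ := hx
      set δ := min (ε/2) (min ((x - a₀)/2) ((b₀ - x)/2)) with hδdef
      have hδ0 : 0 < δ := by
        apply lt_min (by linarith)
        exact lt_min (by linarith) (by linarith)
      have hδε : δ < ε := lt_of_le_of_lt (min_le_left _ _) (by linarith)
      have hδa : δ ≤ (x - a₀)/2 := le_trans (min_le_right _ _) (min_le_left _ _)
      have hδb : δ ≤ (b₀ - x)/2 := le_trans (min_le_right _ _) (min_le_right _ _)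
      have hmemp : x + δ ∈ S := ⟨by linarith, by linarith⟩
      have hmemm : x - δ ∈ S := ⟨by linarith, by linarith⟩
      have hgp : ContDiffAt ℝ n (fun ζ => f (ζ + δ)) x := by
        have h1 : ContDiffAt ℝ n f (x + δ) := ih.contDiffAt (hopen.mem_nhds hmemp)
        exact h1.comp x ((contDiff_id.add contDiff_const).contDiffAt)
      have hgm : ContDiffAt ℝ n (fun ζ => f (ζ - δ)) x := by
        have h1 : ContDiffAt ℝ n f (x - δ) := ih.contDiffAt (hopen.mem_nhds hmemm)
        exact h1.comp x ((contDiff_id.sub contDiff_const).contDiffAt)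
      have hg : ContDiffAt ℝ n (fun ζ => (f (ζ + δ) - f (ζ - δ)) / (2 * δ)) x :=
        (hgp.sub hgm).div_const _
      have heq : deriv f =ᶠ[nhds x] fun ζ => (f (ζ + δ) - f (ζ - δ)) / (2 * δ) := by
        have hU : Set.Ioo (x - δ/2) (x + δ/2) ∈ nhds x :=
          Ioo_mem_nhds (by linarith) (by linarith)
        filter_upwards [hU] with ζ hζ
        obtain ⟨h1, h2⟩ := hζ
        have habs : |δ| = δ := abs_of_pos hδ0
        exact hmid ζ ⟨by linarith, by linarith⟩ δ (by rw [habs]; exact hδ0)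
          (by rw [habs]; exact hδε) ⟨by linarith, by linarith⟩ ⟨by linarith, by linarith⟩
      exact ((hg.congr_of_eventuallyEq heq).contDiffWithinAt)
  -- derivatives exist
  have hfd : ∀ y ∈ S, HasDerivAt f (g y) y := fun y hy => (hf y hy).hasDerivAt
  have hgd : ∀ y ∈ S, HasDerivAt g (h y) y := by
    intro y hy
    have h2 := key 2
    rw [show ((2 : ℕ) : WithTop ℕ∞) = ((1:ℕ) : WithTop ℕ∞) + 1 by push_cast; rfl,
      contDiffOn_succ_iff_deriv_of_isOpen hopen] at h2
    have : ContDiffAt ℝ ((1:ℕ) : WithTop ℕ∞) g y := h2.2.2.contDiffAt (hopen.mem_nhds hy)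
    exact (this.differentiableAt (by simp)).hasDerivAt
  -- the open sets of admissible increments
  set U : ℝ → Set ℝ := fun ζ => {t : ℝ | |t| < ε} ∩ ((fun t => ζ + t) ⁻¹' S)
      ∩ ((fun t => ζ - t) ⁻¹' S) with hUdef
  have hUopen : ∀ ζ, IsOpen (U ζ) := by
    intro ζ
    exact (((isOpen_lt continuous_abs continuous_const).inter
      (hopen.preimage (continuous_const.add continuous_id))).inter
      (hopen.preimage (continuous_const.sub continuous_id)))
  have hUmem : ∀ ζ {t : ℝ}, t ∈ U ζ → |t| < ε ∧ ζ + t ∈ S ∧ ζ - t ∈ S :=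
    fun ζ t ht => ⟨ht.1.1, ht.1.2, ht.2⟩
  -- Step A: the identity incl. t = 0
  have hA : ∀ ζ ∈ S, ∀ t ∈ U ζ, f (ζ + t) - f (ζ - t) - 2 * t * g ζ = 0 := by
    intro ζ hζ t ht
    obtain ⟨ht1, ht2, ht3⟩ := hUmem ζ ht
    rcases eq_or_ne t 0 with rfl | ht0
    · simp
    · have := hmid ζ hζ t (abs_pos.mpr ht0) ht1 ht2 ht3
      show f (ζ + t) - f (ζ - t) - 2 * t * (g ζ) = 0
      rw [this]
      field_simp
      ring
  -- Step B: g(ζ+t) + g(ζ-t) = 2 g(ζ)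
  have hB : ∀ ζ ∈ S, ∀ t ∈ U ζ, g (ζ + t) + g (ζ - t) - 2 * g ζ = 0 := by
    intro ζ hζ t₀ ht₀
    obtain ⟨ht1, ht2, ht3⟩ := hUmem ζ ht₀
    have h1 : HasDerivAt (fun t => f (ζ + t)) (g (ζ + t₀)) t₀ := by
      simpa [Function.comp_def] using (hfd (ζ + t₀) ht2).comp t₀ ((hasDerivAt_id t₀).const_add ζ)
    have h2 : HasDerivAt (fun t => f (ζ - t)) (-g (ζ - t₀)) t₀ := by
      simpa [Function.comp_def] using (hfd (ζ - t₀) ht3).comp t₀ ((hasDerivAt_id t₀).const_sub ζ)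
    have h3 : HasDerivAt (fun t => 2 * t * g ζ) (2 * g ζ) t₀ := by
      simpa using ((hasDerivAt_id t₀).const_mul 2).mul_const (g ζ)
    have D : HasDerivAt (fun t => f (ζ + t) - f (ζ - t) - 2 * t * g ζ)
        (g (ζ + t₀) + g (ζ - t₀) - 2 * g ζ) t₀ := by
      have := (h1.sub h2).sub h3
      exact this.congr_deriv (by ring)
    have heq : (fun t => f (ζ + t) - f (ζ - t) - 2 * t * g ζ) =ᶠ[nhds t₀] fun _ => 0 := by
      filter_upwards [(hUopen ζ).mem_nhds ht₀] with t ht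
      exact hA ζ hζ t ht
    exact (D.congr_of_eventuallyEq heq.symm).unique (hasDerivAt_const t₀ 0)
  -- Step C: h(ζ+t) = h(ζ-t)
  have hC : ∀ ζ ∈ S, ∀ t ∈ U ζ, h (ζ + t) - h (ζ - t) = 0 := by
    intro ζ hζ t₀ ht₀
    obtain ⟨ht1, ht2, ht3⟩ := hUmem ζ ht₀
    have h1 : HasDerivAt (fun t => g (ζ + t)) (h (ζ + t₀)) t₀ := by
      simpa [Function.comp_def] using (hgd (ζ + t₀) ht2).comp t₀ ((hasDerivAt_id t₀).const_add ζ)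
    have h2 : HasDerivAt (fun t => g (ζ - t)) (-h (ζ - t₀)) t₀ := by
      simpa [Function.comp_def] using (hgd (ζ - t₀) ht3).comp t₀ ((hasDerivAt_id t₀).const_sub ζ)
    have D : HasDerivAt (fun t => g (ζ + t) + g (ζ - t) - 2 * g ζ)
        (h (ζ + t₀) - h (ζ - t₀)) t₀ := by
      have := (h1.add h2).sub (hasDerivAt_const (x := t₀) (2 * g ζ))
      exact this.congr_deriv (by ring)
    have heq : (fun t => g (ζ + t) + g (ζ - t) - 2 * g ζ) =ᶠ[nhds t₀] fun _ => 0 := by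
      filter_upwards [(hUopen ζ).mem_nhds ht₀] with t ht
      exact hB ζ hζ t ht
    exact (D.congr_of_eventuallyEq heq.symm).unique (hasDerivAt_const t₀ 0)
  -- Now analyticity
  refine ContDiffOn.of_le (n := ⊤) ?_ le_top
  rw [contDiffOn_omega_iff_analyticOn (uniqueDiffOn_Ioo a₀ b₀)]
  apply AnalyticOnNhd.analyticOn
  intro x hx
  obtain ⟨hxa, hxb⟩ := hx
  set r := min ε (min ((x - a₀)/2) ((b₀ - x)/2)) with hrdef
  have hr0 : 0 < r := by
    apply lt_min hε
    exact lt_min (by linarith) (by linarith)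
  have hrε : r ≤ ε := min_le_left _ _
  have hra : r ≤ (x - a₀)/2 := le_trans (min_le_right _ _) (min_le_left _ _)
  have hrb : r ≤ (b₀ - x)/2 := le_trans (min_le_right _ _) (min_le_right _ _)
  set J := Set.Ioo (x - r) (x + r) with hJdef
  have hJS : J ⊆ S := by
    rintro y ⟨hy1, hy2⟩
    exact ⟨by linarith, by linarith⟩
  have hxJ : x ∈ J := ⟨by linarith, by linarith⟩
  -- h is constant on J
  have hconst : ∀ y ∈ J, h y = h x := by
    rintro y ⟨hy1, hy2⟩
    have hζ : (y + x)/2 ∈ S := ⟨by linarith, by linarith⟩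
    have hUt : (x - y)/2 ∈ U ((y + x)/2) := by
      refine ⟨⟨?_, ?_⟩, ?_⟩
      · show |(x - y)/2| < ε
        rw [abs_lt]; constructor <;> linarith
      · show (y + x)/2 + (x - y)/2 ∈ S
        have : (y + x)/2 + (x - y)/2 = x := by ring
        rw [this]; exact ⟨hxa, hxb⟩
      · show (y + x)/2 - (x - y)/2 ∈ S
        have : (y + x)/2 - (x - y)/2 = y := by ring
        rw [this]; exact hJS ⟨hy1, hy2⟩
    have := hC ((y + x)/2) hζ ((x - y)/2) hUt
    have e1 : (y + x)/2 + (x - y)/2 = x := by ring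
    have e2 : (y + x)/2 - (x - y)/2 = y := by ring
    rw [e1, e2] at this
    linarith
  set c := h x with hcdef
  set d := g x - c * x with hddef
  -- g is affine on J
  have hG : ∀ y ∈ J, g y = c * y + d := by
    intro y hy
    have hzero : ∀ w ∈ J, HasDerivAt (fun w => g w - c * w) 0 w := by
      intro w hw
      have h1 : HasDerivAt (fun w => g w - c * w) (h w - c) w :=
        (hgd w (hJS hw)).sub (by simpa using (hasDerivAt_id w).const_mul c)
      have h0 : h w - c = 0 := by rw [hconst w hw]; ring
      rwa [h0] at h1
    have := aux_const_of_deriv_zero hzero hy hxJ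
    have : g y - c * y = g x - c * x := this
    rw [hddef]; linarith
  -- f is quadratic on J
  have hF : ∀ y ∈ J, f y = c/2 * y^2 + d * y + (f x - (c/2 * x^2 + d * x)) := by
    intro y hy
    have hzero : ∀ w ∈ J, HasDerivAt (fun w => f w - (c/2 * w^2 + d * w)) 0 w := by
      intro w hw
      have h1 : HasDerivAt (fun w => c/2 * w^2 + d * w) (c/2 * (2 * w^1) + d) w := by
        exact ((hasDerivAt_pow 2 w).const_mul (c/2)).add
          (by simpa using (hasDerivAt_id w).const_mul d)
      have h2 : HasDerivAt (fun w => f w - (c/2 * w^2 + d * w))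
          (g w - (c/2 * (2 * w^1) + d)) w := (hfd w (hJS hw)).sub h1
      have h0 : g w - (c/2 * (2 * w^1) + d) = 0 := by rw [hG w hw]; ring
      rwa [h0] at h2
    have := aux_const_of_deriv_zero hzero hy hxJ
    have : f y - (c/2 * y^2 + d * y) = f x - (c/2 * x^2 + d * x) := this
    linarith
  -- conclude analyticity at x
  have hP : AnalyticAt ℝ (fun y => c/2 * y^2 + d * y + (f x - (c/2 * x^2 + d * x))) x := by
    exact ((analyticAt_const.mul ((analyticAt_id).pow 2)).add
      (analyticAt_const.mul analyticAt_id)).add analyticAt_const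
  apply hP.congr
  filter_upwards [isOpen_Ioo.mem_nhds hxJ] with y hy
  exact (hF y hy).symm
end

section
/- Under the midpoint mean value hypothesis, the third derivative of f vanishes identically on I: f'''(ζ) = 0 for all ζ ∈ I. -/
open Set Filter Metric Topology

/-- Under the midpoint mean value property, the third derivative of `f` vanishes on `I`. -/
theorem midpoint_mvt_third_deriv_zero
    (a₀ b₀ : ℝ) (I : Set ℝ) (hI : I = Set.Ioo a₀ b₀)
    (f : ℝ → ℝ) (hf : ∀ x ∈ I, DifferentiableAt ℝ f x)
    (ε : ℝ) (hε : 0 < ε)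
    (hmid : ∀ ζ ∈ I, ∀ t : ℝ, 0 < |t| → |t| < ε → ζ + t ∈ I → ζ - t ∈ I →
      deriv f ζ = (f (ζ + t) - f (ζ - t)) / (2 * t)) :
    ∀ ζ ∈ I, iteratedDeriv 3 f ζ = 0 := by
  have hIopen : IsOpen I := hI ▸ isOpen_Ioo
  -- the identity, in subtraction form, valid also at t = 0
  have hmid' : ∀ η ∈ I, ∀ t : ℝ, |t| < ε → η + t ∈ I → η - t ∈ I →
      f (η + t) - f (η - t) - 2 * t * deriv f η = 0 := by
    intro η hη t ht h1 h2
    rcases eq_or_ne t 0 with rfl | h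
    · simp
    · have h0 := hmid η hη t (abs_pos.mpr h) ht h1 h2
      rw [h0]
      field_simp
      ring
  -- first differentiated identity: f'(η+t) + f'(η-t) = 2 f'(η)
  have hA : ∀ η ∈ I, ∀ t : ℝ, |t| < ε → η + t ∈ I → η - t ∈ I →
      deriv f (η + t) + deriv f (η - t) - 2 * deriv f η = 0 := by
    intro η hη t ht h1 h2
    have hSopen : IsOpen {s : ℝ | |s| < ε ∧ η + s ∈ I ∧ η - s ∈ I} := by
      have : {s : ℝ | |s| < ε ∧ η + s ∈ I ∧ η - s ∈ I} =
          (abs ⁻¹' Iio ε) ∩ ((fun s => η + s) ⁻¹' I ∩ (fun s => η - s) ⁻¹' I) := by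
        ext s; simp [Set.mem_setOf_eq, and_assoc]
      rw [this]
      exact (isOpen_Iio.preimage continuous_abs).inter
        ((hIopen.preimage (continuous_const.add continuous_id)).inter (hIopen.preimage (continuous_const.sub continuous_id)))
    have hev : (fun s => f (η + s) - f (η - s) - 2 * s * deriv f η) =ᶠ[𝓝 t]
        (fun _ => (0 : ℝ)) := by
      filter_upwards [hSopen.mem_nhds (show t ∈ _ from ⟨ht, h1, h2⟩)] with s hs
      exact hmid' η hη s hs.1 hs.2.1 hs.2.2
    have d1 : HasDerivAt (fun s : ℝ => f (η + s)) (deriv f (η + t) * 1) t :=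
      (hf _ h1).hasDerivAt.comp t ((hasDerivAt_id t).const_add η)
    have d2 : HasDerivAt (fun s : ℝ => f (η - s)) (deriv f (η - t) * (-1)) t :=
      (hf _ h2).hasDerivAt.comp t ((hasDerivAt_id t).const_sub η)
    have d3 : HasDerivAt (fun s : ℝ => f (η + s) - f (η - s) - 2 * s * deriv f η)
        (deriv f (η + t) * 1 - deriv f (η - t) * (-1) - 2 * deriv f η) t := by
      have : HasDerivAt (fun s : ℝ => 2 * s * deriv f η) (2 * deriv f η) t := by
        simpa using ((hasDerivAt_id t).const_mul 2).mul_const (deriv f η)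
      exact (d1.sub d2).sub this
    have h0 : deriv (fun s : ℝ => f (η + s) - f (η - s) - 2 * s * deriv f η) t = 0 := by
      rw [hev.deriv_eq]; simp
    have := d3.deriv
    rw [h0] at this
    linarith [this]
  -- f' is differentiable on I
  have hC1 : ∀ x ∈ I, DifferentiableAt ℝ (deriv f) x := by
    intro x hx
    have hx' : x ∈ Set.Ioo a₀ b₀ := hI ▸ hx
    obtain ⟨hx1, hx2⟩ := hx'
    set τ := min (ε / 2) (min ((x - a₀) / 2) ((b₀ - x) / 2)) with hτ
    have hτ1 : τ ≤ ε / 2 := min_le_left _ _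
    have hτ2 : τ ≤ (x - a₀) / 2 := le_trans (min_le_right _ _) (min_le_left _ _)
    have hτ3 : τ ≤ (b₀ - x) / 2 := le_trans (min_le_right _ _) (min_le_right _ _)
    have hτpos : 0 < τ := lt_min (by linarith) (lt_min (by linarith) (by linarith))
    have hev : deriv f =ᶠ[𝓝 x] fun y => (f (y + τ) - f (y - τ)) / (2 * τ) := by
      filter_upwards [Metric.ball_mem_nhds x (half_pos hτpos)] with y hy
      rw [Real.ball_eq_Ioo] at hy
      obtain ⟨hy1, hy2⟩ := hy
      have hyI : y ∈ I := by rw [hI]; constructor <;> linarith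
      have h1 : y + τ ∈ I := by rw [hI]; constructor <;> linarith
      have h2 : y - τ ∈ I := by rw [hI]; constructor <;> linarith
      exact hmid y hyI τ (abs_pos.mpr (ne_of_gt hτpos))
        (by rw [abs_of_pos hτpos]; linarith) h1 h2
    rw [hev.differentiableAt_iff]
    have h1 : x + τ ∈ I := by rw [hI]; constructor <;> linarith
    have h2 : x - τ ∈ I := by rw [hI]; constructor <;> linarith
    have d1 : DifferentiableAt ℝ (fun y => f (y + τ)) x :=
      (hf _ h1).comp x (differentiable_id.differentiableAt.add_const τ)
    have d2 : DifferentiableAt ℝ (fun y => f (y - τ)) x :=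
      (hf _ h2).comp x (differentiable_id.differentiableAt.sub_const τ)
    exact (d1.sub d2).div_const (2 * τ)
  -- second differentiated identity: f''(η+t) = f''(η-t)
  have hB : ∀ η ∈ I, ∀ t : ℝ, |t| < ε → η + t ∈ I → η - t ∈ I →
      deriv (deriv f) (η + t) = deriv (deriv f) (η - t) := by
    intro η hη t ht h1 h2
    have hSopen : IsOpen {s : ℝ | |s| < ε ∧ η + s ∈ I ∧ η - s ∈ I} := by
      have : {s : ℝ | |s| < ε ∧ η + s ∈ I ∧ η - s ∈ I} =
          (abs ⁻¹' Iio ε) ∩ ((fun s => η + s) ⁻¹' I ∩ (fun s => η - s) ⁻¹' I) := by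
        ext s; simp [Set.mem_setOf_eq, and_assoc]
      rw [this]
      exact (isOpen_Iio.preimage continuous_abs).inter
        ((hIopen.preimage (continuous_const.add continuous_id)).inter (hIopen.preimage (continuous_const.sub continuous_id)))
    have hev : (fun s => deriv f (η + s) + deriv f (η - s) - 2 * deriv f η) =ᶠ[𝓝 t]
        (fun _ => (0 : ℝ)) := by
      filter_upwards [hSopen.mem_nhds (show t ∈ _ from ⟨ht, h1, h2⟩)] with s hs
      exact hA η hη s hs.1 hs.2.1 hs.2.2
    have d1 : HasDerivAt (fun s : ℝ => deriv f (η + s)) (deriv (deriv f) (η + t) * 1) t :=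
      (hC1 _ h1).hasDerivAt.comp t ((hasDerivAt_id t).const_add η)
    have d2 : HasDerivAt (fun s : ℝ => deriv f (η - s)) (deriv (deriv f) (η - t) * (-1)) t :=
      (hC1 _ h2).hasDerivAt.comp t ((hasDerivAt_id t).const_sub η)
    have d3 : HasDerivAt (fun s : ℝ => deriv f (η + s) + deriv f (η - s) - 2 * deriv f η)
        (deriv (deriv f) (η + t) * 1 + deriv (deriv f) (η - t) * (-1) - 0) t :=
      (d1.add d2).sub (hasDerivAt_const t _)
    have h0 : deriv (fun s : ℝ => deriv f (η + s) + deriv f (η - s) - 2 * deriv f η) t = 0 := by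
      rw [hev.deriv_eq]; simp
    have := d3.deriv
    rw [h0] at this
    linarith [this]
  -- conclusion
  intro ζ hζ
  have hζ' : ζ ∈ Set.Ioo a₀ b₀ := hI ▸ hζ
  obtain ⟨hζ1, hζ2⟩ := hζ'
  set δ := min ε (min (ζ - a₀) (b₀ - ζ)) with hδ
  have hδ1 : δ ≤ ε := min_le_left _ _
  have hδ2 : δ ≤ ζ - a₀ := le_trans (min_le_right _ _) (min_le_left _ _)
  have hδ3 : δ ≤ b₀ - ζ := le_trans (min_le_right _ _) (min_le_right _ _)
  have hδpos : 0 < δ := lt_min hε (lt_min (by linarith) (by linarith))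
  have hconst : deriv (deriv f) =ᶠ[𝓝 ζ] fun _ => deriv (deriv f) ζ := by
    filter_upwards [Metric.ball_mem_nhds ζ hδpos] with x hx
    rw [Real.ball_eq_Ioo] at hx
    obtain ⟨hx1, hx2⟩ := hx
    set η := (x + ζ) / 2 with hη
    set t := (x - ζ) / 2 with ht
    have hηI : η ∈ I := by rw [hI]; constructor <;> (simp only [hη]; linarith)
    have habs : |t| < ε := by
      rw [abs_lt]; constructor <;> (simp only [ht]; linarith)
    have he1 : η + t = x := by rw [hη, ht]; ring
    have he2 : η - t = ζ := by rw [hη, ht]; ring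
    have hxI : x ∈ I := by rw [hI]; constructor <;> linarith
    have := hB η hηI t habs (he1 ▸ hxI) (he2 ▸ hζ)
    rw [he1, he2] at this
    exact this
  have h3 : iteratedDeriv 3 f ζ = deriv (deriv (deriv f)) ζ := by
    simp [iteratedDeriv_succ, iteratedDeriv_zero]
  rw [h3, hconst.deriv_eq, deriv_const]
end

section
/- If f : ℝ → ℝ is differentiable everywhere and satisfies the exact midpoint mean value property f((a+b)/2)' = (f(b) - f(a))/(b - a) for all a ≠ b, then f is a quadratic polynomial: there exist constants A, B, C with f(x) = A x² + B x + C for all x. -/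
/-- The exact global midpoint mean value property characterizes quadratic polynomials. -/
theorem global_midpoint_mvt_quadratic
    (f : ℝ → ℝ) (hf : Differentiable ℝ f)
    (h : ∀ a b : ℝ, a ≠ b → deriv f ((a + b) / 2) = (f b - f a) / (b - a)) :
    ∃ A B C : ℝ, ∀ x : ℝ, f x = A * x ^ 2 + B * x + C := by
  set g := deriv f with hgdef
  have key : ∀ x t : ℝ, t ≠ 0 → f (x + t) - f (x - t) = 2 * t * g x := by
    intro x t ht
    have hne : x - t ≠ x + t := by intro hh; apply ht; linarith
    have h1 := h (x - t) (x + t) hne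
    rw [show (x - t + (x + t)) / 2 = x from by ring,
        show x + t - (x - t) = 2 * t from by ring] at h1
    field_simp at h1
    linarith
  have gdiff : Differentiable ℝ g := by
    have hgfun : g = fun x => (f (x + 1) - f (x - 1)) / 2 := by
      funext x
      have := key x 1 one_ne_zero
      linarith
    rw [hgfun]
    exact ((hf.comp (differentiable_id.add_const 1)).sub
      (hf.comp (differentiable_id.sub_const 1))).div_const 2
  have jensen : ∀ x t : ℝ, g (x + t) + g (x - t) = 2 * g x := by
    intro x t
    rcases eq_or_ne t 0 with rfl | ht
    · simp; ring
    · have h1 := key (x + t) t ht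
      have h2 := key (x - t) t ht
      have h3 := key x (2 * t) (mul_ne_zero two_ne_zero ht)
      rw [show x + t + t = x + 2 * t from by ring,
          show x + t - t = x from by ring] at h1
      rw [show x - t + t = x from by ring,
          show x - t - t = x - 2 * t from by ring] at h2
      have hmain : 2 * t * (g (x + t) + g (x - t)) = 2 * t * (2 * g x) := by
        linear_combination h3 - h1 - h2
      exact mul_left_cancel₀ (mul_ne_zero two_ne_zero ht) hmain
  have dg_const : ∀ u v : ℝ, deriv g u = deriv g v := by
    intro u v
    have hxu : (u + v) / 2 + (u - v) / 2 = u := by ring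
    have hxv : (u + v) / 2 - (u - v) / 2 = v := by ring
    set x := (u + v) / 2 with hx
    set t := (u - v) / 2 with htdef
    have hF : (fun s : ℝ => g (x + s) + g (x - s)) = fun _ => 2 * g x :=
      funext fun s => jensen x s
    have d1 : HasDerivAt (fun s : ℝ => g (x + s)) (deriv g (x + t)) t := by
      have := ((gdiff (x + t)).hasDerivAt).comp t ((hasDerivAt_id t).const_add x)
      simpa [Function.comp_def] using this
    have d2 : HasDerivAt (fun s : ℝ => g (x - s)) (-deriv g (x - t)) t := by
      have := ((gdiff (x - t)).hasDerivAt).comp t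
        (((hasDerivAt_id t).neg).const_add x)
      simpa [sub_eq_add_neg, Function.comp_def] using this
    have dsum : HasDerivAt (fun s : ℝ => g (x + s) + g (x - s))
        (deriv g (x + t) + -deriv g (x - t)) t := d1.add d2
    have dconst : HasDerivAt (fun s : ℝ => g (x + s) + g (x - s)) 0 t := by
      rw [hF]; exact hasDerivAt_const t (2 * g x)
    have := dsum.unique dconst
    rw [hxu, hxv] at this
    linarith
  -- g is affine
  have gaffine : ∀ x : ℝ, g x = deriv g 0 * x + g 0 := by
    intro x
    set c := deriv g 0 with hc
    have hφdiff : Differentiable ℝ (fun x => g x - c * x) :=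
      gdiff.sub ((differentiable_id.const_mul c))
    have hφderiv : ∀ x, deriv (fun x => g x - c * x) x = 0 := by
      intro x
      have hd : HasDerivAt (fun x => g x - c * x) (deriv g x - c) x :=
        ((gdiff x).hasDerivAt).sub (((hasDerivAt_id x).const_mul c).congr_deriv (by ring))
      rw [hd.deriv, dg_const x 0, ← hc, sub_self]
    have := is_const_of_deriv_eq_zero hφdiff hφderiv x 0
    simp only [mul_zero, sub_zero] at this
    linarith
  -- conclude f quadratic
  refine ⟨deriv g 0 / 2, g 0, f 0, fun x => ?_⟩
  set c := deriv g 0 with hc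
  set b := g 0 with hb
  have hψdiff : Differentiable ℝ (fun x => f x - (c / 2 * x ^ 2 + b * x)) :=
    hf.sub (((differentiable_pow 2).const_mul _).add (differentiable_id.const_mul b))
  have hψderiv : ∀ x, deriv (fun x => f x - (c / 2 * x ^ 2 + b * x)) x = 0 := by
    intro x
    have hq : HasDerivAt (fun x : ℝ => c / 2 * x ^ 2 + b * x) (c * x + b) x := by
      have h1 := (hasDerivAt_pow 2 x).const_mul (c / 2)
      have h2 := (hasDerivAt_id x).const_mul b
      have := h1.add h2
      exact this.congr_deriv (by push_cast; ring)
    have hd : HasDerivAt (fun x => f x - (c / 2 * x ^ 2 + b * x)) (g x - (c * x + b)) x :=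
      ((hf x).hasDerivAt).sub hq
    rw [hd.deriv, gaffine x]
    ring
  have := is_const_of_deriv_eq_zero hψdiff hψderiv x 0
  nlinarith [this]
end
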